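/- Let H = (V,E) be a finite graph with complex edge weights w_e. Then |C_H(w)| ≤ T_H(w') · ∏_{e∈E} max{1, |1+w_e|}, where w'_e = min{|w_e|, |w_e|/|1+w_e|} (interpreted as |w_e| when 1+w_e = 0), C_H(w) is the generating polynomial of connected spanning subgraphs of H, and T_H(w') is the generating polynomial of spanning trees of H with weights w'_e. -/

import Mathlib

/-- The spanning subgraph `(V, A)` of a multigraph with edge-endpoint map
`ends : E → Sym2 V` is connected. -/
def SpanningConnected {V E : Type*} (ends : E → Sym2 V) (A : Finset E) : Prop :=
  (SimpleGraph.fromEdgeSet (ends '' (A : Set E))).Connected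

/-- `(V, T)` is a spanning tree: connected with `|T| = |V| - 1`. -/
def SpanningTree {V E : Type*} [Fintype V] (ends : E → Sym2 V)
    (T : Finset E) : Prop :=
  SpanningConnected ends T ∧ T.card + 1 = Fintype.card V

/-- The effective edge weight `w'_e = min {|w_e|, |w_e|/|1+w_e|}`,
interpreted as `|w_e|` when `1 + w_e = 0`. -/
noncomputable def effWeight (w : ℂ) : ℝ :=
  if 1 + w = 0 then norm w
  else min (norm w) (norm w / norm (1 + w))

/-!
Order the edges and run Kruskal's algorithm on a connected edge set `A`: an edge is kept iff it
is not spanned by the smaller edges of `A`, and the output is a spanning tree `T`. The sets `A`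
with output `T` form the Boolean interval `[T, R(T)]`, where `R(T)` adds to `T` the edges spanned
by the smaller edges of `T`. Summing over these intervals gives Penrose's identity
`C_H(w) = ∑_T ∏_{e ∈ T} w_e ∏_{e ∈ R(T) \ T} (1 + w_e)`. Each term is then bounded using
`|w_e| = w'_e · max {1, |1 + w_e|}` on `T` and `|1 + w_e| ≤ max {1, |1 + w_e|}` on `R(T) \ T`.
-/

open Finset SimpleGraph

theorem Finset.sum_prod_Icc {ι R : Type*} [CommSemiring R] [DecidableEq ι] {s t : Finset ι}
    (h : s ⊆ t) (f : ι → R) :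
    ∑ u ∈ Icc s t, ∏ i ∈ u, f i = (∏ i ∈ s, f i) * ∏ i ∈ t \ s, (1 + f i) := by
  have hdisj : ∀ u ∈ (t \ s).powerset, Disjoint s u := fun u hu =>
    disjoint_of_subset_right (mem_powerset.1 hu) disjoint_sdiff
  rw [Icc_eq_image_powerset h, sum_image, prod_one_add, mul_sum]
  · exact sum_congr rfl fun u hu => prod_union (hdisj u hu)
  · intro u hu v hv huv
    rw [← union_sdiff_cancel_left (hdisj u hu), ← union_sdiff_cancel_left (hdisj v hv)]
    exact congrArg (· \ s) huv

namespace Penrose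

variable {V E : Type*} {ends : E → Sym2 V} {S T A : Finset E} {e f : E}

def edgeGraph (ends : E → Sym2 V) (S : Finset E) : SimpleGraph V :=
  fromEdgeSet (ends '' S)

lemma edgeGraph_mono (h : S ⊆ T) : edgeGraph ends S ≤ edgeGraph ends T :=
  fromEdgeSet_mono (Set.image_mono (coe_subset.2 h))

lemma edgeGraph_insert [DecidableEq E] {x y : V} (he : ends e = s(x, y)) :
    edgeGraph ends (insert e S) = edgeGraph ends S ⊔ edge x y := by
  rw [edgeGraph, edgeGraph, edge, ← fromEdgeSet_union, coe_insert, Set.image_insert_eq, he,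
    Set.insert_eq, Set.union_comm]

/-- `e` lies in the closure of `S` in the cycle matroid. -/
def Spans (ends : E → Sym2 V) (S : Finset E) (e : E) : Prop :=
  ∀ x y, ends e = s(x, y) → (edgeGraph ends S).Reachable x y

lemma Spans.mono (h : S ⊆ T) (hS : Spans ends S e) : Spans ends T e :=
  fun x y hxy => (hS x y hxy).mono (edgeGraph_mono h)

lemma spans_of_mem (hf : f ∈ S) (hfe : ends f = ends e) : Spans ends S e := by
  intro x y hxy
  by_cases hxy' : x = y
  · exact hxy' ▸ Reachable.refl x
  · exact Adj.reachable ((fromEdgeSet_adj _).2 ⟨⟨f, hf, hfe.trans hxy⟩, hxy'⟩)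

lemma spans_of_isDiag (he : (ends e).IsDiag) : Spans ends S e := by
  intro x y hxy
  rw [hxy, Sym2.mk_isDiag_iff] at he
  exact he ▸ Reachable.refl x

lemma reachable_of_forall_spans (H : ∀ f ∈ S, Spans ends T f) {u v : V}
    (h : (edgeGraph ends S).Reachable u v) : (edgeGraph ends T).Reachable u v := by
  rw [reachable_iff_reflTransGen] at h ⊢
  refine h.lift' id fun a b hab => ?_
  obtain ⟨⟨f, hf, hfab⟩, -⟩ := (fromEdgeSet_adj _).1 hab
  exact (reachable_iff_reflTransGen _ _).1 (H f hf a b hfab)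

lemma Spans.trans (H : ∀ f ∈ S, Spans ends T f) (hS : Spans ends S e) : Spans ends T e :=
  fun x y hxy => reachable_of_forall_spans H (hS x y hxy)

section LinearOrder

variable [LinearOrder E]

open scoped Classical in
noncomputable def kruskal (ends : E → Sym2 V) (A : Finset E) : Finset E :=
  {e ∈ A | ¬ Spans ends {f ∈ A | f < e} e}

lemma mem_kruskal : e ∈ kruskal ends A ↔ e ∈ A ∧ ¬ Spans ends {f ∈ A | f < e} e := by
  classical
  simp [kruskal]

lemma kruskal_subset : kruskal ends A ⊆ A := fun _ he => (mem_kruskal.1 he).1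

def GreedyIndep (ends : E → Sym2 V) (T : Finset E) : Prop :=
  ∀ e ∈ T, ¬ Spans ends {f ∈ T | f < e} e

lemma greedyIndep_kruskal : GreedyIndep ends (kruskal ends A) := fun _ he hspans =>
  (mem_kruskal.1 he).2 (hspans.mono (filter_subset_filter _ kruskal_subset))

namespace GreedyIndep

lemma not_isDiag (hT : GreedyIndep ends T) (he : e ∈ T) : ¬ (ends e).IsDiag :=
  fun hdiag => hT e he (spans_of_isDiag hdiag)

lemma injOn (hT : GreedyIndep ends T) : Set.InjOn ends T := by
  intro e he f hf hef
  by_contra hne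
  rcases lt_or_gt_of_ne hne with hlt | hlt
  · exact hT f hf (spans_of_mem (mem_filter.2 ⟨he, hlt⟩) hef)
  · exact hT e he (spans_of_mem (mem_filter.2 ⟨hf, hlt⟩) hef.symm)

/-- Added in increasing order, each edge joins two vertices not yet joined, so no cycle is
ever closed. -/
lemma isAcyclic (hT : GreedyIndep ends T) : (edgeGraph ends T).IsAcyclic := by
  classical
  induction T using Finset.induction_on_max with
  | empty => simp [edgeGraph]
  | insert e S hlt ih =>
    have hbelow : ∀ f ∈ S, {g ∈ insert e S | g < f} = {g ∈ S | g < f} := fun f hf => by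
      rw [filter_insert, if_neg (hlt f hf).not_gt]
    have hS : GreedyIndep ends S := fun f hf =>
      hbelow f hf ▸ hT f (mem_insert_of_mem hf)
    have he : ¬ Spans ends S e := by
      have : {g ∈ insert e S | g < e} = S := by
        rw [filter_insert, if_neg (lt_irrefl e), filter_true_of_mem hlt]
      exact this ▸ hT e (mem_insert_self e S)
    simp only [Spans, not_forall] at he
    obtain ⟨x, y, hxy, hxy'⟩ := he
    rw [edgeGraph_insert hxy]
    exact (ih hS).sup_edge_of_not_reachable hxy'

lemma card_edgeSet (hT : GreedyIndep ends T) :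
    Nat.card (edgeGraph ends T).edgeSet = T.card := by
  have hdiag : ends '' T \ Sym2.diagSet = ends '' T := by
    refine sdiff_eq_left.2 (Set.disjoint_left.2 ?_)
    rintro _ ⟨e, he, rfl⟩
    exact hT.not_isDiag he
  rw [edgeGraph, edgeSet_fromEdgeSet, hdiag, Nat.card_image_of_injOn hT.injOn,
    Nat.card_coe_set_eq, Set.ncard_coe_finset]

lemma spanningTree [Fintype V] (hT : GreedyIndep ends T) (hc : SpanningConnected ends T) :
    SpanningTree ends T := by
  refine ⟨hc, ?_⟩
  rw [← hT.card_edgeSet, ← Nat.card_eq_fintype_card]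
  exact (isTree_iff_connected_and_card.1 ⟨hc, hT.isAcyclic⟩).2

end GreedyIndep

open scoped Classical in
/-- The partitioning map `R` of Penrose's identity. -/
noncomputable def penroseTop [Fintype E] (ends : E → Sym2 V) (T : Finset E) : Finset E :=
  {e | e ∈ T ∨ Spans ends {f ∈ T | f < e} e}

lemma mem_penroseTop [Fintype E] :
    e ∈ penroseTop ends T ↔ e ∈ T ∨ Spans ends {f ∈ T | f < e} e := by
  classical
  simp [penroseTop]

lemma subset_penroseTop [Fintype E] : T ⊆ penroseTop ends T :=
  fun _ he => mem_penroseTop.2 (.inl he)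

variable [WellFoundedLT E]

/-- By induction on `e`: every smaller discarded edge is in turn spanned by smaller kept edges. -/
lemma spans_kruskal_of_not_mem (he : e ∈ A) (hne : e ∉ kruskal ends A) :
    Spans ends {f ∈ kruskal ends A | f < e} e := by
  induction e using WellFoundedLT.induction with
  | _ e ih =>
    have hspans : Spans ends {f ∈ A | f < e} e := by
      by_contra h
      exact hne (mem_kruskal.2 ⟨he, h⟩)
    refine hspans.trans fun f hf => ?_
    obtain ⟨hfA, hfe⟩ := mem_filter.1 hf
    by_cases hfk : f ∈ kruskal ends A
    · exact spans_of_mem (mem_filter.2 ⟨hfk, hfe⟩) rfl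
    · exact (ih f hfe hfA hfk).mono (monotone_filter_right _ fun _ _ hg => hg.trans hfe)

lemma connected_kruskal_iff :
    (edgeGraph ends (kruskal ends A)).Connected ↔ (edgeGraph ends A).Connected := by
  refine ⟨fun h => h.mono (edgeGraph_mono kruskal_subset), fun h => ?_⟩
  rw [connected_iff] at h ⊢
  refine ⟨fun u v => reachable_of_forall_spans (fun f hf => ?_) (h.1 u v), h.2⟩
  by_cases hfk : f ∈ kruskal ends A
  · exact spans_of_mem hfk rfl
  · exact (spans_kruskal_of_not_mem hf hfk).mono (filter_subset _ _)

lemma kruskal_eq_iff [Fintype E] (hT : GreedyIndep ends T) :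
    kruskal ends A = T ↔ T ⊆ A ∧ A ⊆ penroseTop ends T := by
  constructor
  · rintro rfl
    refine ⟨kruskal_subset, fun e he => mem_penroseTop.2 ?_⟩
    by_cases hek : e ∈ kruskal ends A
    · exact .inl hek
    · exact .inr (spans_kruskal_of_not_mem he hek)
  · rintro ⟨hTA, hAT⟩
    have hspans : ∀ e, Spans ends {f ∈ A | f < e} e → Spans ends {f ∈ T | f < e} e := by
      refine fun e => Spans.trans fun f hf => ?_
      obtain ⟨hfA, hfe⟩ := mem_filter.1 hf
      rcases mem_penroseTop.1 (hAT hfA) with hfT | hfT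
      · exact spans_of_mem (mem_filter.2 ⟨hfT, hfe⟩) rfl
      · exact hfT.mono (monotone_filter_right _ fun _ _ hg => hg.trans hfe)
    ext e
    rw [mem_kruskal]
    constructor
    · rintro ⟨heA, hne⟩
      refine (mem_penroseTop.1 (hAT heA)).resolve_right fun h => hne ?_
      exact h.mono (filter_subset_filter _ hTA)
    · exact fun heT => ⟨hTA heT, fun h => hT e heT (hspans e h)⟩

open scoped Classical in
theorem sum_spanningConnected_eq [Fintype E] {R : Type*} [CommSemiring R] (w : E → R) :
    ∑ A ∈ univ.filter (fun A : Finset E => SpanningConnected ends A), ∏ e ∈ A, w e =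
      ∑ T ∈ univ.filter (fun T : Finset E => GreedyIndep ends T ∧ SpanningConnected ends T),
        (∏ e ∈ T, w e) * ∏ e ∈ penroseTop ends T \ T, (1 + w e) := by
  have hmaps : ∀ A ∈ univ.filter (fun A : Finset E => SpanningConnected ends A),
      kruskal ends A ∈ univ.filter (fun T => GreedyIndep ends T ∧ SpanningConnected ends T) :=
    fun A hA => mem_filter.2 ⟨mem_univ _, greedyIndep_kruskal,
      connected_kruskal_iff.2 (mem_filter.1 hA).2⟩
  rw [← sum_fiberwise_of_maps_to hmaps]
  refine sum_congr rfl fun T hT => ?_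
  obtain ⟨hTi, hTc⟩ := (mem_filter.1 hT).2
  rw [← sum_prod_Icc subset_penroseTop]
  refine sum_congr (ext fun A => ?_) fun _ _ => rfl
  rw [mem_filter, mem_filter, mem_Icc, ← kruskal_eq_iff hTi]
  constructor
  · exact fun h => h.2
  · intro h
    refine ⟨⟨mem_univ _, ?_⟩, h⟩
    exact connected_kruskal_iff.1 (h ▸ hTc : (edgeGraph ends (kruskal ends A)).Connected)

end LinearOrder

end Penrose

lemma effWeight_nonneg (z : ℂ) : 0 ≤ effWeight z := by
  unfold effWeight
  split_ifs
  · exact norm_nonneg z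
  · exact le_min (norm_nonneg z) (by positivity)

lemma norm_eq_effWeight_mul (z : ℂ) : ‖z‖ = effWeight z * max 1 ‖1 + z‖ := by
  unfold effWeight
  split_ifs with h0
  · simp [h0]
  · have hpos : 0 < ‖1 + z‖ := norm_pos_iff.2 h0
    rcases le_total ‖1 + z‖ 1 with h1 | h1
    · rw [max_eq_left h1, mul_one, min_eq_left]
      exact (le_div_iff₀ hpos).2 (mul_le_of_le_one_right (norm_nonneg z) h1)
    · rw [max_eq_right h1, min_eq_right (div_le_self (norm_nonneg z) h1),
        div_mul_cancel₀ _ hpos.ne']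

lemma norm_prod_mul_prod_one_add_le {ι : Type*} [Fintype ι] [DecidableEq ι] (w : ι → ℂ)
    {T R : Finset ι} (hTR : T ⊆ R) :
    ‖(∏ e ∈ T, w e) * ∏ e ∈ R \ T, (1 + w e)‖ ≤
      (∏ e ∈ T, effWeight (w e)) * ∏ e, max 1 ‖1 + w e‖ := by
  have hM : ∀ e, 1 ≤ max 1 ‖1 + w e‖ := fun e => le_max_left _ _
  rw [norm_mul, norm_prod, norm_prod]
  simp_rw [norm_eq_effWeight_mul (w _)]
  rw [prod_mul_distrib, mul_assoc]
  refine mul_le_mul_of_nonneg_left ?_ (prod_nonneg fun e _ => effWeight_nonneg (w e))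
  calc (∏ e ∈ T, max 1 ‖1 + w e‖) * ∏ e ∈ R \ T, ‖1 + w e‖
      ≤ (∏ e ∈ T, max 1 ‖1 + w e‖) * ∏ e ∈ R \ T, max 1 ‖1 + w e‖ := by
        gcongr with e
        exact le_max_right _ _
    _ = ∏ e ∈ R, max 1 ‖1 + w e‖ := by rw [mul_comm, prod_sdiff hTR]
    _ ≤ ∏ e, max 1 ‖1 + w e‖ :=
        prod_le_prod_of_subset_of_one_le (subset_univ R) (fun e _ => zero_le_one.trans (hM e))
          fun e _ _ => hM e

open Penrose

open scoped Classical in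
/-- Extended Penrose inequality:
`|C_H(w)| ≤ T_H(w') · ∏_{e ∈ E} max{1, |1+w_e|}`. -/
theorem stmt_15 {V E : Type*} [Fintype V] [Fintype E] (ends : E → Sym2 V)
    (w : E → ℂ) :
    norm
        (∑ A ∈ Finset.univ.filter (fun A : Finset E => SpanningConnected ends A),
          ∏ e ∈ A, w e) ≤
      (∑ T ∈ Finset.univ.filter (fun T : Finset E => SpanningTree ends T),
          ∏ e ∈ T, effWeight (w e)) *
        ∏ e : E, max 1 (norm (1 + w e)) := by
  let _ : LinearOrder E := LinearOrder.lift' _ (Fintype.equivFin E).injective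
  rw [sum_spanningConnected_eq]
  calc _ ≤ ∑ T ∈ univ.filter (fun T => GreedyIndep ends T ∧ SpanningConnected ends T),
          (∏ e ∈ T, effWeight (w e)) * ∏ e, max 1 ‖1 + w e‖ :=
        norm_sum_le_of_le _ fun T _ => norm_prod_mul_prod_one_add_le w subset_penroseTop
    _ ≤ _ := by
        rw [← sum_mul]
        gcongr
        · exact fun T _ _ => prod_nonneg fun e _ => effWeight_nonneg (w e)
        · exact fun hT => hT.1.spanningTree hT.2
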